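/- For every state q of a B-bounded resource-aware Büchi word automaton with ext q ≠ ∞, there exists an accepting run z from q with val z = ext q; that is, the extent is attained by an optimal accepting run. -/

import Mathlib

/-- Capped subtraction on `ℕ∞`: `n ⊖ m = ∞` if both `n = ∞` and `m = ∞`, and
`n ⊖ m = n - m` (truncated subtraction) otherwise. -/
def csub (n m : ℕ∞) : ℕ∞ := if n = ⊤ ∧ m = ⊤ then ⊤ else n - m

/-- Capped addition on `ℕ∞`: `m +_B n = m + n` if `m + n ≤ B`, and `∞` otherwise. -/
def baddB (B : ℕ) (m n : ℕ∞) : ℕ∞ := if m + n ≤ (B : ℕ∞) then m + n else ⊤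

/-- The operator whose `≤`-least fixpoint (in the pointwise order) is the value
function `val` (B-bounded version):
`Φ v z = (γ (z 0) (z 1) +_B v (fun n => z (n+1))) ⊖ r (z 0)`. -/
def PhiB {Q : Type*} (B : ℕ) (γ : Q → Q → ℕ∞) (r : Q → ℕ∞) (v : (ℕ → Q) → ℕ∞) :
    (ℕ → Q) → ℕ∞ :=
  fun z => csub (baddB B (γ (z 0) (z 1)) (v (fun n => z (n + 1)))) (r (z 0))

/-- A run from `q₀`: a sequence of states starting at `q₀` all of whose steps are
actual transitions (finite weight). -/
def IsRun {Q : Type*} (γ : Q → Q → ℕ∞) (q₀ : Q) (z : ℕ → Q) : Prop :=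
  z 0 = q₀ ∧ ∀ n, γ (z n) (z (n + 1)) ≠ ⊤

/-- A run is accepting iff it visits parity-2 (accepting) states infinitely often. -/
def Accepting {Q : Type*} (Ω : Q → ℕ) (z : ℕ → Q) : Prop :=
  ∀ N, ∃ n, N ≤ n ∧ Ω (z n) = 2

/-- One step of the extent system (B-bounded version):
`q ↦ (⨅ q', (γ q q' +_B u q')) ⊖ r q`. -/
noncomputable def extStepB {Q : Type*} (B : ℕ) (γ : Q → Q → ℕ∞) (r : Q → ℕ∞)
    (u : Q → ℕ∞) (q : Q) : ℕ∞ :=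
  csub (⨅ q' : Q, baddB B (γ q q') (u q')) (r q)

/-- The copairing `[u₁, u₂] : Q → ℕ∞` of `u₁ : Q₁ → ℕ∞` and `u₂ : Q₂ → ℕ∞`. -/
def copair {Q : Type*} (Ω : Q → ℕ) (hΩ : ∀ q, Ω q = 1 ∨ Ω q = 2)
    (u₁ : {q // Ω q = 1} → ℕ∞) (u₂ : {q // Ω q = 2} → ℕ∞) (q : Q) : ℕ∞ :=
  if h : Ω q = 2 then u₂ ⟨q, h⟩ else u₁ ⟨q, (hΩ q).resolve_right h⟩


/-!
Lower bound. Along a run, a `Q₁`-stretch is bounded through the fixpoint equation of `inner`,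
so the infimum of `val` over accepting runs from each accepting state is a prefixpoint of the
outer operator; as `e₂` is its least fixpoint, `ext (z 0) ≤ val z` for every accepting run `z`.

Upper bound. `val` lies below every prefixpoint of `Φ`, so `val z ≤ W 0` whenever budgets `W`
satisfy the one-step inequalities of `Φ` along `z`. A run with budgets starting at `ext q` is
built greedily: from an accepting state step to a minimiser in the fixpoint equation of `ext`
(infima in the well-order `ℕ∞` are attained); from a `Q₁`-state follow a budget-respecting path
into `Q₂`. Such paths exist because their least budgets form a postfixpoint of the inner
operator, hence lie below its greatest fixpoint `inner e₂`.
-/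

open Function

theorem le_of_isLeast_fixedPoints {α : Type*} [CompleteLattice α] {f : α → α} (hf : Monotone f)
    {x a : α} (hx : IsLeast (fixedPoints f) x) (ha : f a ≤ a) : x ≤ a :=
  hx.unique (OrderHom.isLeast_lfp ⟨f, hf⟩) ▸ OrderHom.lfp_le ⟨f, hf⟩ ha

theorem le_of_isGreatest_fixedPoints {α : Type*} [CompleteLattice α] {f : α → α}
    (hf : Monotone f) {x a : α} (hx : IsGreatest (fixedPoints f) x) (ha : a ≤ f a) : a ≤ x :=
  hx.unique (OrderHom.isGreatest_gfp ⟨f, hf⟩) ▸ OrderHom.le_gfp ⟨f, hf⟩ ha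

theorem exists_ge_eq_zero_of_lt_of_ne_zero (ρ : ℕ → ℕ) (hρ : ∀ n, ρ n ≠ 0 → ρ (n + 1) < ρ n)
    (N : ℕ) : ∃ n, N ≤ n ∧ ρ n = 0 := by
  induction hk : ρ N using Nat.strong_induction_on generalizing N with
  | _ k ih =>
    by_cases hk0 : k = 0
    · exact ⟨N, le_rfl, hk.trans hk0⟩
    · obtain ⟨n, hn, hρn⟩ := ih _ (hk ▸ hρ N (hk ▸ hk0)) (N + 1) rfl
      exact ⟨n, by omega, hρn⟩

theorem exists_seq_of_forall_exists {S : Type*} {P : S → Prop} {R : S → S → Prop}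
    (hnext : ∀ s, P s → ∃ s', P s' ∧ R s s') {s₀ : S} (h₀ : P s₀) :
    ∃ f : ℕ → S, f 0 = s₀ ∧ ∀ n, P (f n) ∧ R (f n) (f (n + 1)) := by
  choose! g hgP hgR using hnext
  have hP : ∀ n, P (g^[n] s₀) := fun n => by
    induction n with
    | zero => exact h₀
    | succ n ih => exact iterate_succ_apply' g n s₀ ▸ hgP _ ih
  refine ⟨fun n => g^[n] s₀, rfl, fun n => ⟨hP n, ?_⟩⟩
  simp only [iterate_succ_apply']
  exact hgR _ (hP n)

theorem Accepting.tail {Q : Type*} {Ω : Q → ℕ} {z : ℕ → Q} (hz : Accepting Ω z) :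
    Accepting Ω (fun n => z (n + 1)) := by
  intro N
  obtain ⟨n, hn, hΩn⟩ := hz (N + 1)
  exact ⟨n - 1, by omega, by simpa [Nat.sub_add_cancel (by omega : 1 ≤ n)] using hΩn⟩

theorem csub_top_left (m : ℕ∞) : csub ⊤ m = ⊤ := by
  by_cases hm : m = ⊤ <;> simp [csub, hm]

theorem csub_mono_left (m : ℕ∞) : Monotone (csub · m) := by
  intro n n' h
  by_cases hn' : n' = ⊤
  · simp [hn', csub_top_left]
  · have hn : n ≠ ⊤ := ne_top_of_le_ne_top hn' h
    simpa [csub, hn, hn'] using tsub_le_tsub_right h m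

theorem baddB_mono_right (B : ℕ) (c : ℕ∞) : Monotone (baddB B c) := by
  intro x y h
  have hcxy : c + x ≤ c + y := add_le_add_right h c
  unfold baddB
  by_cases hy : c + y ≤ (B : ℕ∞)
  · rwa [if_pos hy, if_pos (hcxy.trans hy)]
  · rw [if_neg hy]
    exact le_top

theorem ne_top_of_baddB_ne_top {B : ℕ} {c x : ℕ∞} (h : baddB B c x ≠ ⊤) :
    c ≠ ⊤ ∧ x ≠ ⊤ := by
  unfold baddB at h
  split_ifs at h with hle
  · exact WithTop.add_ne_top.mp (ne_top_of_le_ne_top (ENat.natCast_ne_top B) hle)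
  · exact absurd rfl h

section Automaton

variable {Q : Type*} {B : ℕ} {γ : Q → Q → ℕ∞} {r : Q → ℕ∞} {Ω : Q → ℕ}
  {hΩ : ∀ q, Ω q = 1 ∨ Ω q = 2}

theorem copair_of_eq_two (u₁ : {q // Ω q = 1} → ℕ∞) (u₂ : {q // Ω q = 2} → ℕ∞) {x : Q}
    (h : Ω x = 2) : copair Ω hΩ u₁ u₂ x = u₂ ⟨x, h⟩ :=
  dif_pos h

theorem copair_of_eq_one (u₁ : {q // Ω q = 1} → ℕ∞) (u₂ : {q // Ω q = 2} → ℕ∞) {x : Q}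
    (h : Ω x = 1) : copair Ω hΩ u₁ u₂ x = u₁ ⟨x, h⟩ :=
  dif_neg (by omega)

theorem copair_mono {u₁ u₁' : {q // Ω q = 1} → ℕ∞} {u₂ u₂' : {q // Ω q = 2} → ℕ∞}
    (h₁ : u₁ ≤ u₁') (h₂ : u₂ ≤ u₂') : copair Ω hΩ u₁ u₂ ≤ copair Ω hΩ u₁' u₂' := by
  intro x
  rcases hΩ x with h | h
  · simpa only [copair_of_eq_one _ _ h] using h₁ _
  · simpa only [copair_of_eq_two _ _ h] using h₂ _

theorem extStepB_mono : Monotone (extStepB B γ r) :=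
  fun _ _ h _ => csub_mono_left _ (iInf_mono fun x' => baddB_mono_right B _ (h x'))

theorem PhiB_mono : Monotone (PhiB B γ r) :=
  fun _ _ h _ => csub_mono_left _ (baddB_mono_right B _ (h _))

theorem extStepB_le_PhiB {u : Q → ℕ∞} {v : (ℕ → Q) → ℕ∞} {z : ℕ → Q}
    (h : u (z 1) ≤ v (fun n => z (n + 1))) : extStepB B γ r u (z 0) ≤ PhiB B γ r v z :=
  csub_mono_left _ (iInf_le_of_le (z 1) (baddB_mono_right B _ h))

theorem exists_extStepB_eq {u : Q → ℕ∞} {x : Q} (h : extStepB B γ r u x ≠ ⊤) :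
    ∃ x', γ x x' ≠ ⊤ ∧ u x' ≠ ⊤ ∧ extStepB B γ r u x = csub (baddB B (γ x x') (u x')) (r x) := by
  have : Nonempty Q := ⟨x⟩
  obtain ⟨x', hx'⟩ := ciInf_mem fun x' => baddB B (γ x x') (u x')
  have hinf : (⨅ x', baddB B (γ x x') (u x')) ≠ ⊤ := fun h' => h (by
    rw [extStepB, h', csub_top_left])
  refine ⟨x', ne_top_of_baddB_ne_top (hx' ▸ hinf) |>.1, ne_top_of_baddB_ne_top (hx' ▸ hinf) |>.2,
    ?_⟩
  rw [extStepB, ← hx']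

variable (B γ r Ω hΩ) in
noncomputable def innerStep (u₂ : {q // Ω q = 2} → ℕ∞) (u₁ : {q // Ω q = 1} → ℕ∞) :
    {q // Ω q = 1} → ℕ∞ :=
  fun q => extStepB B γ r (copair Ω hΩ u₁ u₂) q.1

variable (B γ r Ω hΩ) in
noncomputable def outerStep (inner : ({q // Ω q = 2} → ℕ∞) → ({q // Ω q = 1} → ℕ∞))
    (u₂ : {q // Ω q = 2} → ℕ∞) : {q // Ω q = 2} → ℕ∞ :=
  fun q => extStepB B γ r (copair Ω hΩ (inner u₂) u₂) q.1

theorem innerStep_mono (u₂ : {q // Ω q = 2} → ℕ∞) : Monotone (innerStep B γ r Ω hΩ u₂) :=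
  fun _ _ h x => extStepB_mono (copair_mono h le_rfl) x.1

variable {inner : ({q // Ω q = 2} → ℕ∞) → ({q // Ω q = 1} → ℕ∞)} {u₂ : {q // Ω q = 2} → ℕ∞}

theorem inner_mono
    (hinner : ∀ u₂, IsGreatest (fixedPoints (innerStep B γ r Ω hΩ u₂)) (inner u₂)) :
    Monotone inner := by
  intro u₂ u₂' h
  refine le_of_isGreatest_fixedPoints (innerStep_mono u₂') (hinner u₂') ?_
  calc inner u₂ = innerStep B γ r Ω hΩ u₂ (inner u₂) := (hinner u₂).1.symm
    _ ≤ innerStep B γ r Ω hΩ u₂' (inner u₂) :=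
      fun x => extStepB_mono (copair_mono le_rfl h) x.1

theorem outerStep_mono
    (hinner : ∀ u₂, IsGreatest (fixedPoints (innerStep B γ r Ω hΩ u₂)) (inner u₂)) :
    Monotone (outerStep B γ r Ω hΩ inner) :=
  fun _ _ h x => extStepB_mono (copair_mono (inner_mono hinner h) h) x.1

theorem extStepB_copair_inner_eq_self
    (h₁ : innerStep B γ r Ω hΩ u₂ (inner u₂) = inner u₂)
    (h₂ : outerStep B γ r Ω hΩ inner u₂ = u₂) :
    extStepB B γ r (copair Ω hΩ (inner u₂) u₂) = copair Ω hΩ (inner u₂) u₂ := by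
  funext x
  rcases hΩ x with h | h
  · rw [copair_of_eq_one _ _ h]; exact congrFun h₁ ⟨x, h⟩
  · rw [copair_of_eq_two _ _ h]; exact congrFun h₂ ⟨x, h⟩

variable {val : (ℕ → Q) → ℕ∞}

theorem copair_inner_le_val (hval : PhiB B γ r val = val)
    (hinner : innerStep B γ r Ω hΩ u₂ (inner u₂) = inner u₂)
    (hu₂ : ∀ z, Accepting Ω z → ∀ h : Ω (z 0) = 2, u₂ ⟨z 0, h⟩ ≤ val z)
    {z : ℕ → Q} (hz : Accepting Ω z) : copair Ω hΩ (inner u₂) u₂ (z 0) ≤ val z := by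
  obtain ⟨n, -, hn⟩ := hz 0
  induction n generalizing z with
  | zero => exact (copair_of_eq_two _ _ hn).trans_le (hu₂ z hz hn)
  | succ n ih =>
    rcases hΩ (z 0) with h | h
    · calc copair Ω hΩ (inner u₂) u₂ (z 0)
          = extStepB B γ r (copair Ω hΩ (inner u₂) u₂) (z 0) := by
            rw [copair_of_eq_one _ _ h]; exact (congrFun hinner ⟨z 0, h⟩).symm
        _ ≤ PhiB B γ r val z := extStepB_le_PhiB (ih hz.tail hn)
        _ = val z := congrFun hval z
    · exact (copair_of_eq_two _ _ h).trans_le (hu₂ z hz h)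

theorem ext_le_val_of_accepting (hval : PhiB B γ r val = val)
    (hinner : ∀ u₂, IsGreatest (fixedPoints (innerStep B γ r Ω hΩ u₂)) (inner u₂))
    {e₂ : {q // Ω q = 2} → ℕ∞} (he₂ : IsLeast (fixedPoints (outerStep B γ r Ω hΩ inner)) e₂)
    {z : ℕ → Q} (hz : Accepting Ω z) : copair Ω hΩ (inner e₂) e₂ (z 0) ≤ val z := by
  let a₂ : {q // Ω q = 2} → ℕ∞ := fun x => ⨅ (z : ℕ → Q) (_ : Accepting Ω z) (_ : z 0 = x.1), val z
  have ha₂ : ∀ z, Accepting Ω z → ∀ h : Ω (z 0) = 2, a₂ ⟨z 0, h⟩ ≤ val z :=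
    fun z hz _ => iInf₂_le_of_le z hz (iInf_le _ rfl)
  have ha₂_prefixed : outerStep B γ r Ω hΩ inner a₂ ≤ a₂ := by
    rintro ⟨x, -⟩
    refine le_iInf₂ fun z hz => le_iInf fun hz0 => ?_
    subst hz0
    calc outerStep B γ r Ω hΩ inner a₂ ⟨z 0, _⟩
        ≤ PhiB B γ r val z := extStepB_le_PhiB (copair_inner_le_val hval (hinner a₂).1 ha₂ hz.tail)
      _ = val z := congrFun hval z
  have he₂_le : e₂ ≤ a₂ := le_of_isLeast_fixedPoints (outerStep_mono hinner) he₂ ha₂_prefixed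
  exact copair_inner_le_val hval (hinner e₂).1 (fun z hz h => (he₂_le _).trans (ha₂ z hz h)) hz

theorem val_le_of_forall_step_le (hval : IsLeast (fixedPoints (PhiB B γ r)) val) (z : ℕ → Q)
    (W : ℕ → ℕ∞) (hW : ∀ n, csub (baddB B (γ (z n) (z (n + 1))) (W (n + 1))) (r (z n)) ≤ W n) :
    val z ≤ W 0 := by
  let a : (ℕ → Q) → ℕ∞ := fun y => ⨅ (n : ℕ) (_ : (fun k => z (n + k)) = y), W n
  have ha : PhiB B γ r a ≤ a := by
    intro y
    refine le_iInf₂ fun n hn => ?_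
    subst hn
    have hsucc : a (fun k => z (n + (k + 1))) ≤ W (n + 1) :=
      iInf₂_le_of_le (n + 1) (funext fun k => by rw [Nat.add_right_comm, Nat.add_assoc]) le_rfl
    exact (csub_mono_left _ (baddB_mono_right B _ hsucc)).trans (hW n)
  exact le_of_isLeast_fixedPoints PhiB_mono hval ha z |>.trans
    (iInf₂_le_of_le 0 (funext fun k => by rw [Nat.zero_add]) le_rfl)

variable (B γ r) in
def IsBudgetStep (x : Q) (b : ℕ∞) (x' : Q) (b' : ℕ∞) : Prop :=
  γ x x' ≠ ⊤ ∧ csub (baddB B (γ x x') b') (r x) ≤ b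

variable (B γ r Ω) in
/-- Within budget `b`, a path of `m` budget steps leads from `x` to an accepting state `y`
left with budget `ext y < ⊤`. -/
def Reaches (ext : Q → ℕ∞) : ℕ → Q → ℕ∞ → Prop
  | 0, x, b => Ω x = 2 ∧ ext x ≠ ⊤ ∧ ext x ≤ b
  | m + 1, x, b => ∃ x' b', IsBudgetStep B γ r x b x' b' ∧ Reaches ext m x' b'

variable {ext : Q → ℕ∞}

theorem Reaches.mono {m : ℕ} {x : Q} {b b' : ℕ∞} (h : Reaches B γ r Ω ext m x b) (hb : b ≤ b') :
    Reaches B γ r Ω ext m x b' := by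
  cases m with
  | zero => exact ⟨h.1, h.2.1, h.2.2.trans hb⟩
  | succ m =>
    obtain ⟨x', b'', hstep, hreach⟩ := h
    exact ⟨x', b'', ⟨hstep.1, hstep.2.trans hb⟩, hreach⟩

theorem exists_reaches_copair
    (hinner : ∀ u₂, IsGreatest (fixedPoints (innerStep B γ r Ω hΩ u₂)) (inner u₂))
    {e₂ : {q // Ω q = 2} → ℕ∞} {x : Q} (hx : copair Ω hΩ (inner e₂) e₂ x ≠ ⊤) :
    ∃ m, Reaches B γ r Ω (copair Ω hΩ (inner e₂) e₂) m x (copair Ω hΩ (inner e₂) e₂ x) := by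
  set ext := copair Ω hΩ (inner e₂) e₂ with hext
  let R : {q // Ω q = 1} → ℕ∞ := fun x => sInf {b | ∃ m, Reaches B γ r Ω ext m x.1 b}
  have hR_mem : ∀ x, R x ≠ ⊤ → ∃ m, Reaches B γ r Ω ext m x.1 (R x) := by
    intro x hx
    show R x ∈ {b | ∃ m, Reaches B γ r Ω ext m x.1 b}
    refine csInf_mem (Set.nonempty_iff_ne_empty.2 fun h => hx ?_)
    simp only [R, h, sInf_empty]
  have hR_post : R ≤ innerStep B γ r Ω hΩ e₂ R := by
    intro x
    by_cases htop : innerStep B γ r Ω hΩ e₂ R x = ⊤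
    · exact htop ▸ le_top
    obtain ⟨x', hγ, hx', heq⟩ := exists_extStepB_eq htop
    obtain ⟨m, hm⟩ : ∃ m, Reaches B γ r Ω ext m x' (copair Ω hΩ R e₂ x') := by
      rcases hΩ x' with h | h
      · rw [copair_of_eq_one _ _ h] at hx' ⊢
        exact hR_mem _ hx'
      · rw [copair_of_eq_two _ _ h] at hx' ⊢
        have hext' : ext x' = e₂ ⟨x', h⟩ := copair_of_eq_two _ _ h
        exact ⟨0, h, hext' ▸ hx', hext'.le⟩
    exact sInf_le ⟨m + 1, x', _, ⟨hγ, heq.symm.le⟩, hm⟩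
  have hR_le := le_of_isGreatest_fixedPoints (innerStep_mono e₂) (hinner e₂) hR_post
  rcases hΩ x with h | h
  · have hRx : R ⟨x, h⟩ ≤ ext x := by
      rw [hext, copair_of_eq_one _ _ h]
      exact hR_le _
    obtain ⟨m, hm⟩ := hR_mem _ (ne_top_of_le_ne_top hx hRx)
    exact ⟨m, hm.mono hRx⟩
  · exact ⟨0, h, hx, le_rfl⟩

theorem Reaches.exists_next (hfix : extStepB B γ r ext = ext)
    (hreach : ∀ x, ext x ≠ ⊤ → ∃ m, Reaches B γ r Ω ext m x (ext x))
    {m : ℕ} {x : Q} {b : ℕ∞} (h : Reaches B γ r Ω ext m x b) :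
    ∃ x' b' m', IsBudgetStep B γ r x b x' b' ∧ Reaches B γ r Ω ext m' x' b' ∧ (m ≠ 0 → m' < m) := by
  cases m with
  | zero =>
    obtain ⟨-, hx, hle⟩ := h
    obtain ⟨x', hγ, hx', heq⟩ := exists_extStepB_eq (by rwa [hfix] : extStepB B γ r ext x ≠ ⊤)
    obtain ⟨m', hm'⟩ := hreach x' hx'
    exact ⟨x', ext x', m', ⟨hγ, heq.symm.le.trans ((congrFun hfix x).le.trans hle)⟩, hm',
      fun h => absurd rfl h⟩
  | succ m =>
    obtain ⟨x', b', hstep, hreach⟩ := h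
    exact ⟨x', b', m, hstep, hreach, fun _ => Nat.lt_succ_self m⟩

theorem exists_accepting_run_of_reaches (hfix : extStepB B γ r ext = ext)
    (hreach : ∀ x, ext x ≠ ⊤ → ∃ m, Reaches B γ r Ω ext m x (ext x))
    {m : ℕ} {x : Q} {b : ℕ∞} (h : Reaches B γ r Ω ext m x b) :
    ∃ (z : ℕ → Q) (W : ℕ → ℕ∞), z 0 = x ∧ W 0 = b ∧
      (∀ n, IsBudgetStep B γ r (z n) (W n) (z (n + 1)) (W (n + 1))) ∧ Accepting Ω z := by
  obtain ⟨f, hf0, hf⟩ := exists_seq_of_forall_exists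
    (P := fun s : Q × ℕ∞ × ℕ => Reaches B γ r Ω ext s.2.2 s.1 s.2.1)
    (R := fun s s' => IsBudgetStep B γ r s.1 s.2.1 s'.1 s'.2.1 ∧ (s.2.2 ≠ 0 → s'.2.2 < s.2.2))
    (fun s hs => by
      obtain ⟨x', b', m', hstep, hreach', hlt⟩ := hs.exists_next hfix hreach
      exact ⟨(x', b', m'), hreach', hstep, hlt⟩)
    (s₀ := (x, b, m)) h
  refine ⟨fun n => (f n).1, fun n => (f n).2.1, by simp only [hf0], by simp only [hf0],
    fun n => (hf n).2.1, fun N => ?_⟩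
  obtain ⟨n, hn, hf0n⟩ := exists_ge_eq_zero_of_lt_of_ne_zero (fun n => (f n).2.2)
    (fun n => (hf n).2.2) N
  have h0 := (hf n).1
  simp only [hf0n] at h0
  exact ⟨n, hn, h0.1⟩

end Automaton

theorem stmt11_general {Q : Type*}
    (γ : Q → Q → ℕ∞) (r : Q → ℕ∞) (Ω : Q → ℕ) (hΩ : ∀ q, Ω q = 1 ∨ Ω q = 2)
    (B : ℕ)
    -- `val` is the `≤`-least fixpoint (pointwise order) of `Φ`
    (val : (ℕ → Q) → ℕ∞)
    (hval : PhiB B γ r val = val)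
    (hvalLeast : ∀ w, PhiB B γ r w = w → val ≤ w)
    -- `inner u₂` is the `≤`-greatest fixpoint of `u₁ ↦ extStep [u₁, u₂]` on `Q₁`
    (inner : ({q // Ω q = 2} → ℕ∞) → ({q // Ω q = 1} → ℕ∞))
    (hinner : ∀ u₂, (fun q : {q // Ω q = 1} =>
      extStepB B γ r (copair Ω hΩ (inner u₂) u₂) q.1) = inner u₂)
    (hinnerGreatest : ∀ u₂ u₁, (fun q : {q // Ω q = 1} =>
      extStepB B γ r (copair Ω hΩ u₁ u₂) q.1) = u₁ → u₁ ≤ inner u₂)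
    -- `e₂` is the `≤`-least fixpoint of `u₂ ↦ extStep [inner u₂, u₂]` on `Q₂`
    (e₂ : {q // Ω q = 2} → ℕ∞)
    (he₂ : (fun q : {q // Ω q = 2} =>
      extStepB B γ r (copair Ω hΩ (inner e₂) e₂) q.1) = e₂)
    (he₂Least : ∀ u₂, (fun q : {q // Ω q = 2} =>
      extStepB B γ r (copair Ω hΩ (inner u₂) u₂) q.1) = u₂ → e₂ ≤ u₂)
    -- the extent is the copairing `[inner e₂, e₂]`
    (ext : Q → ℕ∞) (hext : ext = copair Ω hΩ (inner e₂) e₂)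
    (q : Q) (hq : ext q ≠ ⊤) :
    ∃ z : ℕ → Q, IsRun γ q z ∧ Accepting Ω z ∧ val z = ext q := by
  have hinner' : ∀ u₂, IsGreatest (fixedPoints (innerStep B γ r Ω hΩ u₂)) (inner u₂) :=
    fun u₂ => ⟨hinner u₂, hinnerGreatest u₂⟩
  subst hext
  have hreach : ∀ x, copair Ω hΩ (inner e₂) e₂ x ≠ ⊤ →
      ∃ m, Reaches B γ r Ω (copair Ω hΩ (inner e₂) e₂) m x (copair Ω hΩ (inner e₂) e₂ x) :=
    fun _ hx => exists_reaches_copair hinner' hx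
  obtain ⟨m, hm⟩ := hreach q hq
  obtain ⟨z, W, hz0, hW0, hstep, hacc⟩ :=
    exists_accepting_run_of_reaches (extStepB_copair_inner_eq_self (hinner e₂) he₂) hreach hm
  refine ⟨z, ⟨hz0, fun n => (hstep n).1⟩, hacc, le_antisymm ?_ ?_⟩
  · exact hW0 ▸ val_le_of_forall_step_le ⟨hval, hvalLeast⟩ z W fun n => (hstep n).2
  · exact hz0 ▸ ext_le_val_of_accepting hval hinner' ⟨he₂, he₂Least⟩ hacc

/-- for every state `q` of a B-bounded resource-aware Büchi word
automaton with `ext q ≠ ∞`, there exists an accepting run `z` from `q` with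
`val z = ext q`: the extent is attained by an optimal accepting run. -/
theorem stmt11 {Q : Type*} [Fintype Q]
    (γ : Q → Q → ℕ∞) (r : Q → ℕ∞) (Ω : Q → ℕ) (hΩ : ∀ q, Ω q = 1 ∨ Ω q = 2)
    -- B-boundedness: every finite value of `γ` and of `r` is at most `B`
    (B : ℕ)
    (hγB : ∀ q q', γ q q' ≠ ⊤ → γ q q' ≤ (B : ℕ∞))
    (hrB : ∀ q, r q ≠ ⊤ → r q ≤ (B : ℕ∞))
    -- `val` is the `≤`-least fixpoint (pointwise order) of `Φ`
    (val : (ℕ → Q) → ℕ∞)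
    (hval : PhiB B γ r val = val)
    (hvalLeast : ∀ w, PhiB B γ r w = w → val ≤ w)
    -- `inner u₂` is the `≤`-greatest fixpoint of `u₁ ↦ extStep [u₁, u₂]` on `Q₁`
    (inner : ({q // Ω q = 2} → ℕ∞) → ({q // Ω q = 1} → ℕ∞))
    (hinner : ∀ u₂, (fun q : {q // Ω q = 1} =>
      extStepB B γ r (copair Ω hΩ (inner u₂) u₂) q.1) = inner u₂)
    (hinnerGreatest : ∀ u₂ u₁, (fun q : {q // Ω q = 1} =>
      extStepB B γ r (copair Ω hΩ u₁ u₂) q.1) = u₁ → u₁ ≤ inner u₂)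
    -- `e₂` is the `≤`-least fixpoint of `u₂ ↦ extStep [inner u₂, u₂]` on `Q₂`
    (e₂ : {q // Ω q = 2} → ℕ∞)
    (he₂ : (fun q : {q // Ω q = 2} =>
      extStepB B γ r (copair Ω hΩ (inner e₂) e₂) q.1) = e₂)
    (he₂Least : ∀ u₂, (fun q : {q // Ω q = 2} =>
      extStepB B γ r (copair Ω hΩ (inner u₂) u₂) q.1) = u₂ → e₂ ≤ u₂)
    -- the extent is the copairing `[inner e₂, e₂]`
    (ext : Q → ℕ∞) (hext : ext = copair Ω hΩ (inner e₂) e₂)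
    (q : Q) (hq : ext q ≠ ⊤) :
    ∃ z : ℕ → Q, IsRun γ q z ∧ Accepting Ω z ∧ val z = ext q :=
  stmt11_general γ r Ω hΩ B val hval hvalLeast inner hinner hinnerGreatest e₂ he₂ he₂Least ext hext
    q hq
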